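/- arXiv:1809.04355 — 2 statements merged into one kernel-verified Lean document; each statement's English description precedes it below -/
import Mathlib

section
/- Let 0 ≤ γ < 1 and suppose every task τᵢ satisfies Cᵢ/min{Tᵢ, Dᵢ} ≤ γ. In the deadline-monotonic partitioning algorithm, if assigning task τ_l fails the demand test C_l + Σ_{τ_j ∈ T_m} dbf*(τ_j, D_l) > D_l on processor m, then Σ_{τ_j ∈ T_m ∪ {τ_l}} (C_j/D_l + u_j·max{0, (D_l − D_j)/D_l}) > 1, and in particular Σ_{τ_j ∈ T_m} (C_j/min{T_j,D_j}) weighted appropriately yields a load of more than (1 − γ)/2 on processor m in at least one of the two measures (density at D_l or utilization). -/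
/-!
Past the deadline `D ≤ t`, the approximate demand `dbf*(τ, t) = C + (t - D)·C/T` divided by `t`
is exactly the summand `C/t + (C/T)·max 0 ((t - D)/t)`; for `τ_l` itself (`D = t`) the demand is
just `C`. Summing over `T_m ∪ {τ_l}` turns the failed demand test into the first claim. Each summand of
`T_m` is at most `C_j/D_l + u_j`, and the summand of `τ_l` is `C_l/D_l ≤ C_l/min{T_l, D_l} ≤ γ`,
so the two loads of `T_m` add up to more than `1 - γ` and one of them exceeds `(1 - γ)/2`.
-/

/-- Approximate demand bound function of a sporadic task (C, T, D) at time t. -/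
noncomputable def dbfStar (C T D t : ℝ) : ℝ :=
  if t < D then 0 else ((t - D) / T + 1) * C

open Finset

theorem dbfStar_of_le {C T D t : ℝ} (h : D ≤ t) : dbfStar C T D t = C + C / T * (t - D) := by
  rw [dbfStar, if_neg h.not_gt]
  ring

theorem dbfStar_self (C T t : ℝ) : dbfStar C T t t = C := by
  simp [dbfStar_of_le le_rfl]

theorem dbfStar_div_eq {C T D t : ℝ} (ht : 0 < t) (h : D ≤ t) :
    dbfStar C T D t / t = C / t + C / T * max 0 ((t - D) / t) := by
  rw [max_eq_right (div_nonneg (sub_nonneg.mpr h) ht.le), dbfStar_of_le h]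
  field_simp

theorem normalized_demand_le {C T D t : ℝ} (hC : 0 ≤ C) (hT : 0 ≤ T) (hD : 0 ≤ D) (ht : 0 < t) :
    C / t + C / T * max 0 ((t - D) / t) ≤ C / t + C / T := by
  have hmax : max 0 ((t - D) / t) ≤ 1 :=
    max_le zero_le_one ((div_le_one ht).mpr (by linarith))
  have := mul_le_mul_of_nonneg_left hmax (div_nonneg hC hT)
  linarith

theorem div_le_of_div_min_le {C T D γ : ℝ} (hC : 0 ≤ C) (hT : 0 < T) (hD : 0 < D)
    (h : C / min T D ≤ γ) : C / D ≤ γ :=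
  (div_le_div_of_nonneg_left hC (lt_min hT hD) (min_le_right T D)).trans h

theorem demand_test_failure_load_general {ι : Type*} [DecidableEq ι]
    (Tm : Finset ι) (l : ι) (hl : l ∉ Tm)
    (C T D : ι → ℝ) (γ : ℝ)
    (hpos : ∀ i ∈ Tm ∪ {l}, 0 < C i ∧ 0 < T i ∧ 0 < D i)
    (hγ : ∀ i ∈ Tm ∪ {l}, C i / min (T i) (D i) ≤ γ)
    (hDM : ∀ j ∈ Tm, D j ≤ D l)
    (hfail : C l + ∑ j ∈ Tm, dbfStar (C j) (T j) (D j) (D l) > D l) :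
    ∑ j ∈ Tm ∪ {l}, (C j / D l + (C j / T j) * max 0 ((D l - D j) / D l)) > 1 ∧
    (∑ j ∈ Tm, C j / D l > (1 - γ) / 2 ∨ ∑ j ∈ Tm, C j / T j > (1 - γ) / 2) := by
  have hlmem : l ∈ Tm ∪ {l} := mem_union_right _ (mem_singleton_self l)
  obtain ⟨hCl, hTl, hDl⟩ := hpos l hlmem
  have hdisj : Disjoint Tm {l} := disjoint_singleton_right.mpr hl
  have hsplit : ∀ f : ι → ℝ, ∑ j ∈ Tm ∪ {l}, f j = ∑ j ∈ Tm, f j + f l := fun f => by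
    rw [sum_union hdisj, sum_singleton]
  have hload : ∑ j ∈ Tm ∪ {l}, (C j / D l + (C j / T j) * max 0 ((D l - D j) / D l))
      = (C l + ∑ j ∈ Tm, dbfStar (C j) (T j) (D j) (D l)) / D l := by
    rw [hsplit, ← sum_congr rfl fun j hj => dbfStar_div_eq hDl (hDM j hj),
      ← dbfStar_div_eq hDl le_rfl, dbfStar_self, ← sum_div, add_div, add_comm]
  refine ⟨hload ▸ (one_lt_div hDl).mpr hfail, ?_⟩
  by_contra! hsmall
  have hTm : ∑ j ∈ Tm, (C j / D l + (C j / T j) * max 0 ((D l - D j) / D l))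
      ≤ ∑ j ∈ Tm, C j / D l + ∑ j ∈ Tm, C j / T j := by
    rw [← sum_add_distrib]
    refine sum_le_sum fun j hj => ?_
    obtain ⟨hCj, hTj, hDj⟩ := hpos j (mem_union_left _ hj)
    exact normalized_demand_le hCj.le hTj.le hDj.le hDl
  have hl_le : C l / D l ≤ γ := div_le_of_div_min_le hCl.le hTl hDl (hγ l hlmem)
  have hfail' := (one_lt_div hDl).mpr hfail
  rw [← hload, hsplit, sub_self, zero_div, max_self, mul_zero, add_zero] at hfail'
  linarith [hsmall.1, hsmall.2]

theorem demand_test_failure_load {ι : Type*} [DecidableEq ι]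
    (Tm : Finset ι) (l : ι) (hl : l ∉ Tm)
    (C T D : ι → ℝ) (γ : ℝ) (hγ₀ : 0 ≤ γ) (hγ₁ : γ < 1)
    (hpos : ∀ i ∈ Tm ∪ {l}, 0 < C i ∧ 0 < T i ∧ 0 < D i)
    (hγ : ∀ i ∈ Tm ∪ {l}, C i / min (T i) (D i) ≤ γ)
    (hDM : ∀ j ∈ Tm, D j ≤ D l)
    (hfail : C l + ∑ j ∈ Tm, dbfStar (C j) (T j) (D j) (D l) > D l) :
    ∑ j ∈ Tm ∪ {l}, (C j / D l + (C j / T j) * max 0 ((D l - D j) / D l)) > 1 ∧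
    (∑ j ∈ Tm, C j / D l > (1 - γ) / 2 ∨ ∑ j ∈ Tm, C j / T j > (1 - γ) / 2) :=
  demand_test_failure_load_general Tm l hl C T D γ hpos hγ hDM hfail
end

section
/- Let V be a finite set of 2D rational vectors where each v has either (v₁ > 0 and v₂ > v₁) or (v₁ > 0 and v₂ = 0). Construct tasks: for v with v₂ > v₁, τ_v = (C = v₂, T = v₂/v₁, D = 1); let H be a common positive integer multiple of the periods v₂/v₁ of these tasks; for v with v₂ = 0, τ_v = (C = v₁·H, T = H, D = H). Then a subset V' ⊆ V can be feasibly packed in one bin (Σ_{v∈V'} v₁ ≤ 1 and Σ_{v∈V'} v₂ ≤ 1) if and only if the corresponding task set {τ_v : v ∈ V'} is EDF-feasible on one processor (Σ dbf(τ_v, t) ≤ t for all t ≥ 0). -/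
/-- Demand bound function of a sporadic task (C, T, D) at time t. -/
noncomputable def dbf (C T D t : ℝ) : ℝ := ((max 0 (⌊(t - D) / T⌋ + 1) : ℤ) : ℝ) * C

/-- Execution time of the task built from the vector (v₁ i, v₂ i). -/
noncomputable def vecC (v₁ v₂ : ι → ℚ) (H : ℝ) (i : ι) : ℝ :=
  if v₂ i = 0 then (v₁ i : ℝ) * H else (v₂ i : ℝ)

/-- Period of the task built from the vector (v₁ i, v₂ i). -/
noncomputable def vecT (v₁ v₂ : ι → ℚ) (H : ℝ) (i : ι) : ℝ :=
  if v₂ i = 0 then H else (v₂ i : ℝ) / (v₁ i : ℝ)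

/-- Relative deadline of the task built from the vector (v₁ i, v₂ i). -/
noncomputable def vecD (v₁ v₂ : ι → ℚ) (H : ℝ) (i : ι) : ℝ :=
  if v₂ i = 0 then H else 1

/-!
Since `H` is a multiple of every period, each task demands exactly `v₁ * H` more processor time
in every window of length `H`, so the demand at `t = m * H + r` with `0 ≤ r < H` is
`m * H * ∑ v₁` plus the demand at `r`. Inside `[0, H)` a task with `v₂ = 0` demands nothing, and a
task with `v₁ < v₂` demands nothing before its deadline `1` and at most `v₂ + (r - 1) * v₁`
afterwards; the two packing constraints bound these sums by `r`. Conversely, the demand at `t = H`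
is `H * ∑ v₁` and the demand at `t = 1` is at least `∑ v₂`.
-/

section Dbf

variable {C T D t : ℝ}

lemma dbf_nonneg (hC : 0 ≤ C) : 0 ≤ dbf C T D t :=
  mul_nonneg (by exact_mod_cast le_max_left 0 _) hC

lemma dbf_eq_zero_of_lt (hT : 0 < T) (ht : t < D) : dbf C T D t = 0 := by
  have hfloor : ⌊(t - D) / T⌋ < 0 :=
    Int.floor_lt.mpr (by exact_mod_cast div_neg_of_neg_of_pos (sub_neg.mpr ht) hT)
  simp [dbf, max_eq_left (by omega : ⌊(t - D) / T⌋ + 1 ≤ 0)]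

lemma dbf_deadline : dbf C T D D = C := by
  simp [dbf]

lemma floor_div_period_add_one_nonneg (hT : 0 < T) (ht : D - T ≤ t) :
    0 ≤ ⌊(t - D) / T⌋ + 1 := by
  have : ((-1 : ℤ) : ℝ) ≤ (t - D) / T := by
    rw [le_div_iff₀ hT]
    push_cast
    linarith
  linarith [Int.le_floor.mpr this]

lemma dbf_add_nat_mul_period (hT : 0 < T) (ht : D - T ≤ t) (n : ℕ) :
    dbf C T D (t + n * T) = dbf C T D t + n * C := by
  have hshift : (t + n * T - D) / T = (t - D) / T + n := by
    field_simp
    ring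
  have hfloor := floor_div_period_add_one_nonneg hT ht
  simp only [dbf, hshift, Int.floor_add_natCast]
  rw [max_eq_right (by omega), max_eq_right hfloor]
  push_cast
  ring

lemma dbf_le (hC : 0 ≤ C) (hT : 0 < T) (ht : D - T ≤ t) :
    dbf C T D t ≤ ((t - D) / T + 1) * C := by
  rw [dbf, max_eq_right (floor_div_period_add_one_nonneg hT ht)]
  push_cast
  gcongr
  exact Int.floor_le _

end Dbf

noncomputable abbrev vecDbf {ι : Type*} (v₁ v₂ : ι → ℚ) (H : ℝ) (i : ι) (t : ℝ) : ℝ :=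
  dbf (vecC v₁ v₂ H i) (vecT v₁ v₂ H i) (vecD v₁ v₂ H i) t

section VectorTask

variable {ι : Type*} {v₁ v₂ : ι → ℚ} {H t : ℝ} {i : ι}

lemma one_lt_vecPeriod (ha : 0 < v₁ i) (hab : v₁ i < v₂ i) : 1 < (v₂ i : ℝ) / v₁ i :=
  (one_lt_div (by exact_mod_cast ha)).mpr (by exact_mod_cast hab)

lemma vecDbf_add_nat_mul (hi : 0 < v₁ i ∧ (v₁ i < v₂ i ∨ v₂ i = 0)) (hH : 0 < H)
    (hmul : v₁ i < v₂ i → ∃ k : ℕ, H = k * ((v₂ i : ℝ) / (v₁ i : ℝ)))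
    (ht : 0 ≤ t) (m : ℕ) :
    vecDbf v₁ v₂ H i (t + m * H) = vecDbf v₁ v₂ H i t + m * (v₁ i * H) := by
  obtain ⟨ha, hab | hb⟩ := hi
  · have hb : v₂ i ≠ 0 := (ha.trans hab).ne'
    have hT := one_lt_vecPeriod ha hab
    obtain ⟨k, hk⟩ := hmul hab
    simp only [vecDbf, vecC, vecT, vecD, if_neg hb]
    have hperiod : t + m * H = t + ((m * k : ℕ) : ℝ) * (v₂ i / v₁ i) := by
      rw [hk]; push_cast; ring
    rw [hperiod, dbf_add_nat_mul_period (by linarith) (by linarith), hk]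
    have : (v₁ i : ℝ) ≠ 0 := by exact_mod_cast ha.ne'
    field_simp
    push_cast
    ring
  · simp only [vecDbf, vecC, vecT, vecD, if_pos hb]
    rw [dbf_add_nat_mul_period hH (by linarith)]

lemma vecDbf_eq_zero (hi : 0 < v₁ i ∧ (v₁ i < v₂ i ∨ v₂ i = 0)) (hH : 0 < H)
    (ht1 : t < 1) (htH : t < H) : vecDbf v₁ v₂ H i t = 0 := by
  obtain ⟨ha, hab | hb⟩ := hi
  · simp only [vecDbf, vecC, vecT, vecD, if_neg (ha.trans hab).ne']
    exact dbf_eq_zero_of_lt (by linarith [one_lt_vecPeriod ha hab]) ht1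
  · simp only [vecDbf, vecC, vecT, vecD, if_pos hb]
    exact dbf_eq_zero_of_lt hH htH

lemma vecDbf_le (hi : 0 < v₁ i ∧ (v₁ i < v₂ i ∨ v₂ i = 0)) (hH : 0 < H)
    (ht1 : 1 ≤ t) (htH : t < H) : vecDbf v₁ v₂ H i t ≤ (t - 1) * v₁ i + v₂ i := by
  obtain ⟨ha, hab | hb⟩ := hi
  · have hT := one_lt_vecPeriod ha hab
    have ha' : (0 : ℝ) < v₁ i := by exact_mod_cast ha
    simp only [vecDbf, vecC, vecT, vecD, if_neg (ha.trans hab).ne']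
    calc dbf (v₂ i) (v₂ i / v₁ i) 1 t ≤ ((t - 1) / (v₂ i / v₁ i) + 1) * v₂ i :=
          dbf_le (by linarith [(lt_div_iff₀ ha').mp hT]) (by linarith) (by linarith)
      _ = (t - 1) * v₁ i + v₂ i := by
          have : (v₂ i : ℝ) ≠ 0 := by exact_mod_cast (ha.trans hab).ne'
          field_simp
  · simp only [vecDbf, vecC, vecT, vecD, if_pos hb]
    rw [dbf_eq_zero_of_lt hH htH, hb, Rat.cast_zero, add_zero]
    exact mul_nonneg (by linarith) (by exact_mod_cast ha.le)

lemma le_vecDbf_one (hi : 0 < v₁ i ∧ (v₁ i < v₂ i ∨ v₂ i = 0)) (hH : 0 < H) :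
    (v₂ i : ℝ) ≤ vecDbf v₁ v₂ H i 1 := by
  obtain ⟨ha, hab | hb⟩ := hi
  · simp [vecDbf, vecC, vecT, vecD, if_neg (ha.trans hab).ne', dbf_deadline]
  · simp only [vecDbf, vecC, if_pos hb]
    rw [hb, Rat.cast_zero]
    exact dbf_nonneg (mul_nonneg (Rat.cast_nonneg.mpr ha.le) hH.le)

end VectorTask

section TaskSet

variable {ι : Type*} {s : Finset ι} {v₁ v₂ : ι → ℚ} {H : ℝ}

lemma sum_vecDbf_add_nat_mul (hvec : ∀ i ∈ s, 0 < v₁ i ∧ (v₁ i < v₂ i ∨ v₂ i = 0))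
    (hH : 0 < H)
    (hmul : ∀ i ∈ s, v₁ i < v₂ i → ∃ k : ℕ, H = k * ((v₂ i : ℝ) / (v₁ i : ℝ)))
    (t : ℝ) (ht : 0 ≤ t) (m : ℕ) :
    ∑ i ∈ s, vecDbf v₁ v₂ H i (t + m * H) =
      ∑ i ∈ s, vecDbf v₁ v₂ H i t + m * H * ∑ i ∈ s, (v₁ i : ℝ) := by
  rw [Finset.sum_congr rfl fun i hi => vecDbf_add_nat_mul (hvec i hi) hH (hmul i hi) ht m,
    Finset.sum_add_distrib, Finset.mul_sum]
  exact congrArg _ (Finset.sum_congr rfl fun i _ => by ring)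

lemma sum_vecDbf_le_of_lt (hvec : ∀ i ∈ s, 0 < v₁ i ∧ (v₁ i < v₂ i ∨ v₂ i = 0))
    (hH : 0 < H) (h₁ : ∑ i ∈ s, (v₁ i : ℝ) ≤ 1) (h₂ : ∑ i ∈ s, (v₂ i : ℝ) ≤ 1)
    {t : ℝ} (ht0 : 0 ≤ t) (htH : t < H) : ∑ i ∈ s, vecDbf v₁ v₂ H i t ≤ t := by
  rcases lt_or_ge t 1 with ht1 | ht1
  · rw [Finset.sum_eq_zero fun i hi => vecDbf_eq_zero (hvec i hi) hH ht1 htH]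
    exact ht0
  · calc ∑ i ∈ s, vecDbf v₁ v₂ H i t ≤ ∑ i ∈ s, ((t - 1) * v₁ i + v₂ i) :=
          Finset.sum_le_sum fun i hi => vecDbf_le (hvec i hi) hH ht1 htH
      _ = (t - 1) * ∑ i ∈ s, (v₁ i : ℝ) + ∑ i ∈ s, (v₂ i : ℝ) := by
          rw [Finset.sum_add_distrib, Finset.mul_sum]
      _ ≤ (t - 1) * 1 + 1 := by gcongr
      _ = t := by ring

end TaskSet

theorem bin_packing_iff_EDF_feasible {ι : Type*} (V : Finset ι)
    (v₁ v₂ : ι → ℚ)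
    (hvec : ∀ i ∈ V, 0 < v₁ i ∧ (v₁ i < v₂ i ∨ v₂ i = 0))
    (H : ℝ) (hH : 0 < H)
    (hmul : ∀ i ∈ V, v₁ i < v₂ i → ∃ k : ℕ, 1 ≤ k ∧ H = k * ((v₂ i : ℝ) / (v₁ i : ℝ))) :
    ∀ V' ⊆ V,
      ((∑ i ∈ V', (v₁ i : ℝ)) ≤ 1 ∧ (∑ i ∈ V', (v₂ i : ℝ)) ≤ 1) ↔
      (∀ t : ℝ, 0 ≤ t →
        ∑ i ∈ V', dbf (vecC v₁ v₂ H i) (vecT v₁ v₂ H i) (vecD v₁ v₂ H i) t ≤ t) := by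
  intro V' hV'
  have hvec' := fun i hi => hvec i (hV' hi)
  have hshift := sum_vecDbf_add_nat_mul hvec' hH fun i hi hab =>
    (hmul i (hV' hi) hab).imp fun _ => And.right
  change _ ↔ ∀ t : ℝ, 0 ≤ t → ∑ i ∈ V', vecDbf v₁ v₂ H i t ≤ t
  constructor
  · rintro ⟨h₁, h₂⟩ t ht
    obtain ⟨m, hm, hm'⟩ : ∃ m : ℕ, m * H ≤ t ∧ t < (m + 1) * H :=
      ⟨⌊t / H⌋₊, (le_div_iff₀ hH).mp (Nat.floor_le (div_nonneg ht hH.le)),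
        (div_lt_iff₀ hH).mp (Nat.lt_floor_add_one _)⟩
    obtain ⟨r, rfl⟩ : ∃ r, t = r + m * H := ⟨t - m * H, by ring⟩
    rw [hshift r (by linarith) m]
    have hr := sum_vecDbf_le_of_lt hvec' hH h₁ h₂ (by linarith) (by linarith)
    linarith [mul_le_mul_of_nonneg_left h₁ (by positivity : (0 : ℝ) ≤ m * H)]
  · intro hfeas
    have hzero : ∑ i ∈ V', vecDbf v₁ v₂ H i 0 = 0 :=
      Finset.sum_eq_zero fun i hi => vecDbf_eq_zero (hvec' i hi) hH one_pos hH
    constructor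
    · have h := hfeas (0 + (1 : ℕ) * H) (by simpa using hH.le)
      rw [hshift 0 le_rfl 1, hzero] at h
      push_cast at h
      exact le_of_mul_le_mul_right (by linarith) hH
    · exact (Finset.sum_le_sum fun i hi => le_vecDbf_one (hvec' i hi) hH).trans
        (hfeas 1 zero_le_one)
end
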